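/- Suppose X and Y are δ-hyperbolic geodesic spaces and f : X → Y is (λ₁,μ₁)-large scale Lipschitz and (λ₂,μ₂)-radial with respect to a ∈ X. Then there exist constants A, B > 0 depending only on λ₁, μ₁, λ₂, μ₂, δ, a such that for all b, c ∈ X: (f(b),f(c))_{f(a)} ≥ A·(b,c)_a − B. In particular, f is visual. -/

import Mathlib

open Filter Metric Set

noncomputable section

namespace Gromov

variable {X : Type*} [MetricSpace X] {Y : Type*} [MetricSpace Y]

/-- The Gromov product `(x,y)_a = (d(x,a)+d(y,a)-d(x,y))/2`. -/
def gp (a x y : X) : ℝ := (dist x a + dist y a - dist x y) / 2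

/-- Gromov `δ`-hyperbolicity via the `δ/4`-inequality. -/
def IsDeltaHyperbolic (X : Type*) [MetricSpace X] (δ : ℝ) : Prop :=
  ∀ x y z w : X, gp w x y ≥ min (gp w x z) (gp w z y) - δ / 4

/-- `γ` is a geodesic starting at `x`, parametrized by arclength on `[0, M]`. -/
def IsGeodesicOn (γ : ℝ → X) (x : X) (M : ℝ) : Prop :=
  γ 0 = x ∧ ∀ s ∈ Icc (0:ℝ) M, ∀ t ∈ Icc (0:ℝ) M, dist (γ s) (γ t) = |s - t|

/-- Every two points are joined by a geodesic. -/
def IsGeodesicSpace (X : Type*) [MetricSpace X] : Prop :=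
  ∀ x y : X, ∃ γ : ℝ → X, IsGeodesicOn γ x (dist x y) ∧ γ (dist x y) = y

/-- An infinite geodesic ray emanating from `x`. -/
def IsRay (γ : ℝ → X) (x : X) : Prop :=
  γ 0 = x ∧ ∀ s ∈ Ici (0:ℝ), ∀ t ∈ Ici (0:ℝ), dist (γ s) (γ t) = |s - t|

/-- `f` is `(l, μ)`-large scale Lipschitz. -/
def IsLSL (f : X → Y) (l μ : ℝ) : Prop :=
  ∀ x y : X, dist (f x) (f y) ≤ l * dist x y + μ

/-- `f` is large scale Lipschitz. -/
def LSL (f : X → Y) : Prop := ∃ l μ : ℝ, 0 < l ∧ 0 < μ ∧ IsLSL f l μ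

/-- The `(l2, μ2)`-radial lower bound condition with respect to `x₀`:
on every finite geodesic emanating from `x₀`, `l2·d(x,y) - μ2 ≤ d(f(x),f(y))`. -/
def IsRadialWith (f : X → Y) (x₀ : X) (l2 μ2 : ℝ) : Prop :=
  ∀ M, 0 ≤ M → ∀ γ : ℝ → X, IsGeodesicOn γ x₀ M →
    ∀ s ∈ Icc (0:ℝ) M, ∀ t ∈ Icc (0:ℝ) M,
      l2 * dist (γ s) (γ t) - μ2 ≤ dist (f (γ s)) (f (γ t))

/-- `f` is a radial function with respect to `x₀`. -/
def Radial (f : X → Y) (x₀ : X) : Prop :=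
  LSL f ∧ ∃ l2 μ2 : ℝ, 0 < l2 ∧ 0 < μ2 ∧ IsRadialWith f x₀ l2 μ2

/-- `f` is visual: for some basepoint `a`, `(x_n,y_n)_a → ∞` implies
`(f(x_n),f(y_n))_{f(a)} → ∞`. -/
def VisualFn (f : X → Y) : Prop :=
  ∃ a : X, ∀ x y : ℕ → X,
    Tendsto (fun n => gp a (x n) (y n)) atTop atTop →
    Tendsto (fun n => gp (f a) (f (x n)) (f (y n))) atTop atTop

/-- `liminf_{i,j→∞} (x_i,x_j)_a = ∞`: the sequence converges to infinity. -/
def ConvSeq (a : X) (x : ℕ → X) : Prop :=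
  Tendsto (fun p : ℕ × ℕ => gp a (x p.1) (x p.2)) atTop atTop

/-- `liminf_{i,j→∞} (x_i,y_j)_a = ∞`: the two sequences are equivalent. -/
def SeqEquiv (a : X) (x y : ℕ → X) : Prop :=
  Tendsto (fun p : ℕ × ℕ => gp a (x p.1) (y p.2)) atTop atTop

def BSeq (a : X) : Type _ := {x : ℕ → X // ConvSeq a x}

/-- The sequential boundary `∂X` with basepoint `a`. -/
def Boundary (a : X) : Type _ := Quot (fun x y : BSeq a => SeqEquiv a x.1 y.1)

/-- The boundary point represented by a sequence. -/
def bpt (a : X) (x : ℕ → X) (hx : ConvSeq a x) : Boundary a :=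
  Quot.mk _ ⟨x, hx⟩

/-- `liminf_{i,j→∞} (x_i,y_j)_a` as an extended real. -/
def gpSeqs (a : X) (x y : ℕ → X) : EReal :=
  liminf (fun p : ℕ × ℕ => ((gp a (x p.1) (y p.2)) : EReal)) atTop

/-- The basic neighborhood `U(p,r)` in the sequential boundary. -/
def U (a : X) (p : Boundary a) (r : ℝ) : Set (Boundary a) :=
  {q | ∃ (x y : ℕ → X) (hx : ConvSeq a x) (hy : ConvSeq a y),
    bpt a x hx = p ∧ bpt a y hy = q ∧ (r : EReal) ≤ gpSeqs a x y}

instance (a : X) : TopologicalSpace (Boundary a) :=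
  TopologicalSpace.generateFrom {s | ∃ p r, 0 < r ∧ s = U a p r}

/-- The union `X ∪ ∂X`. -/
def Comp (a : X) : Type _ := X ⊕ Boundary a

def Comp.inl {a : X} (x : X) : Comp a := Sum.inl x
def Comp.inr {a : X} (p : Boundary a) : Comp a := Sum.inr p

/-- The extension of `U(p,r)` to `X ∪ ∂X`. -/
def UFull (a : X) (p : Boundary a) (r : ℝ) : Set (Comp a) :=
  {z : X ⊕ Boundary a | Sum.elim
    (fun x : X => ∃ (s : ℕ → X) (hs : ConvSeq a s), bpt a s hs = p ∧
      (r : EReal) ≤ liminf (fun i : ℕ => ((gp a (s i) x) : EReal)) atTop)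
    (fun q : Boundary a => q ∈ U a p r) z}

instance (a : X) : TopologicalSpace (Comp a) :=
  TopologicalSpace.generateFrom
    ({s | ∃ u : Set X, IsOpen u ∧ s = Comp.inl '' u} ∪
     {s | ∃ p r, 0 < r ∧ s = UFull a p r})

/-- The Gromov product of two boundary points:
`(p,q)_a = inf liminf_{i→∞} (x_i,y_i)_a` over representatives. -/
def gpBoundary (a : X) (p q : Boundary a) : EReal :=
  sInf {e : EReal | ∃ (x y : ℕ → X) (hx : ConvSeq a x) (hy : ConvSeq a y),
    bpt a x hx = p ∧ bpt a y hy = q ∧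
    e = liminf (fun i : ℕ => ((gp a (x i) (y i)) : EReal)) atTop}

/-- `K^{-e}` for an extended real exponent `e` (with `K^{-∞} = 0`). -/
def negPow (K : ℝ) (e : EReal) : ℝ :=
  if e = ⊤ then 0 else if e = ⊥ then 0 else Real.rpow K (-(e.toReal))

/-- `d` is a visual metric on `∂X` with parameters `K, C > 1`. -/
def IsVisualMetric (a : X) (d : Boundary a → Boundary a → ℝ) (K C : ℝ) : Prop :=
  1 < K ∧ 1 < C ∧ ∀ p q : Boundary a,
    negPow K (gpBoundary a p q) / C ≤ d p q ∧ d p q ≤ C * negPow K (gpBoundary a p q)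

/-- A map between sets with distinguished distance functions is Hölder. -/
def IsHolder {A B : Type*} (dA : A → A → ℝ) (dB : B → B → ℝ) (g : A → B) : Prop :=
  ∃ L α : ℝ, 0 < L ∧ 0 < α ∧ ∀ p q : A, dB (g p) (g q) ≤ L * Real.rpow (dA p q) α

/-- `(ξ₁,ξ₂)_a = liminf_{t→∞} (ξ₁(t),ξ₂(t))_a` for rays. -/
def gpRays (a : X) (ξ₁ ξ₂ : ℝ → X) : EReal :=
  liminf (fun t : ℝ => ((gp a (ξ₁ t) (ξ₂ t)) : EReal)) atTop

/-- The geodesic ray `ξ` represents the boundary point `p`. -/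
def RayRepresents (a : X) (ξ : ℝ → X) (p : Boundary a) : Prop :=
  ∃ h : ConvSeq a (fun n : ℕ => ξ n), bpt a (fun n : ℕ => ξ n) h = p

/-- `(x,ξ)_a = liminf_{n→∞} (x,ξ(n))_a`. -/
def gpPointRay (a x : X) (ξ : ℝ → X) : ℝ :=
  liminf (fun n : ℕ => gp a x (ξ n)) atTop

/-- `X` is a visual hyperbolic space with basepoint `a` and constant `D`. -/
def IsVisualSpace (a : X) (D : ℝ) : Prop :=
  ∀ x : X, ∃ ξ : ℝ → X, IsRay ξ a ∧ gpPointRay a x ξ > dist x a - D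

/-- A maximal finite geodesic from `a`: it admits no proper geodesic extension. -/
def MaximalGeodesic (ζ : ℝ → X) (a : X) (M : ℝ) : Prop :=
  IsGeodesicOn ζ a M ∧
    ¬ ∃ (M' : ℝ) (ζ' : ℝ → X), M < M' ∧ IsGeodesicOn ζ' a M' ∧
      ∀ t ∈ Icc (0:ℝ) M, ζ' t = ζ t

/-- `f : X → Y` is a radial extension with parameter `A` of `g : ∂X → ∂Y`
(`D` being the visuality constant of `X`). -/
def IsRadialExtension (a : X) (b : Y) (g : Boundary a → Boundary b)
    (A D : ℝ) (f : X → Y) : Prop :=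
  f a = b ∧
  ∀ x : X, x ≠ a →
    ((∃ (ξ : ℝ → X) (t : ℝ), IsRay ξ a ∧ 0 ≤ t ∧ ξ t = x) →
      ∃ (ξ : ℝ → X) (t : ℝ) (η : ℝ → Y), IsRay ξ a ∧ 0 ≤ t ∧ ξ t = x ∧ IsRay η b ∧
        (∃ p : Boundary a, RayRepresents a ξ p ∧ RayRepresents b η (g p)) ∧
        f x = η (A * t)) ∧
    ((¬ ∃ (ξ : ℝ → X) (t : ℝ), IsRay ξ a ∧ 0 ≤ t ∧ ξ t = x) →
      ∃ (M t : ℝ) (ζ ξ : ℝ → X) (η : ℝ → Y),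
        MaximalGeodesic ζ a M ∧ t ∈ Icc (0:ℝ) M ∧ ζ t = x ∧
        IsRay ξ a ∧ gpPointRay a (ζ M) ξ > dist (ζ M) a - D ∧ IsRay η b ∧
        (∃ p : Boundary a, RayRepresents a ξ p ∧ RayRepresents b η (g p)) ∧
        f x = η (A * t))

/-- `f` is coarsely surjective. -/
def CoarselySurjective (f : X → Y) : Prop :=
  ∃ S : ℝ, 0 < S ∧ ∀ y : Y, ∃ x : X, dist y (f x) ≤ S

/-- `f` is bornologous (coarse). -/
def Bornologous (f : X → Y) : Prop :=
  ∀ R : ℝ, 0 < R → ∃ S : ℝ, 0 < S ∧ ∀ x x' : X, dist x x' ≤ R → dist (f x) (f x') ≤ S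

/-- `f` is a coarse embedding. -/
def CoarseEmbedding (f : X → Y) : Prop :=
  Bornologous f ∧
    ∀ R : ℝ, 0 < R → ∃ S : ℝ, 0 < S ∧ ∀ x x' : X, dist (f x) (f x') ≤ R → dist x x' ≤ S

/-- `f` is coarsely `n`-to-1. -/
def CoarselyNto1 (f : X → Y) (n : ℕ) : Prop :=
  ∀ R : ℝ, 0 < R → ∃ S : ℝ, 0 < S ∧ ∀ A : Set Y, EMetric.diam A < ENNReal.ofReal R →
    ∃ B : Fin n → Set X, (f ⁻¹' A = ⋃ i, B i) ∧
      ∀ i, EMetric.diam (B i) < ENNReal.ofReal S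

/-- `g : ∂X → ∂Y` is the boundary map induced by `f`, i.e. `g [(x_n)] = [(f(x_n))]`. -/
def InducedBoundaryMap (a : X) (f : X → Y) (g : Boundary a → Boundary (f a)) : Prop :=
  ∀ (x : ℕ → X) (hx : ConvSeq a x) (hfx : ConvSeq (f a) (f ∘ x)),
    g (bpt a x hx) = bpt (f a) (f ∘ x) hfx

/-- `g` is (at most) `n`-to-1. -/
def NTo1 {A B : Type*} (g : A → B) (n : ℕ) : Prop :=
  ∀ b : B, ∃ s : Finset A, s.card ≤ n ∧ ∀ a : A, g a = b → a ∈ s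

/-- Covering dimension at most `n`: every open cover admits an open refinement
of multiplicity at most `n+1`. -/
def CovDimLE (Z : Type*) [TopologicalSpace Z] (n : ℕ) : Prop :=
  ∀ 𝒰 : Set (Set Z), (∀ u ∈ 𝒰, IsOpen u) → ⋃₀ 𝒰 = univ →
    ∃ 𝒱 : Set (Set Z), (∀ v ∈ 𝒱, IsOpen v) ∧ ⋃₀ 𝒱 = univ ∧
      (∀ v ∈ 𝒱, ∃ u ∈ 𝒰, v ⊆ u) ∧
      ∀ z : Z, {v ∈ 𝒱 | z ∈ v}.Finite ∧ {v ∈ 𝒱 | z ∈ v}.ncard ≤ n + 1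

/-- `c_{f,n}(r)`: the supremum of numbers `B` such that there exist `n+1` points
with mutual Gromov products `< r` whose images have mutual Gromov products `≥ B`. -/
def cfn (a : X) (b : Y) (f : X → Y) (n : ℕ) (r : ℝ) : EReal :=
  sSup {e : EReal | ∃ (B : ℝ) (x : Fin (n + 1) → X), e = (B : EReal) ∧
    (∀ i j, i ≠ j → gp a (x i) (x j) < r) ∧
    (∀ i j, i ≠ j → B ≤ gp b (f (x i)) (f (x j)))}

/-!
Let `m = (b,c)_a` and let `γ`, `σ` be geodesics from `a` to `b` and to `c`. By thinness of the
geodesic triangle, `γ m` and `σ m` are `δ`-close, so `f(γ m)` and `f(σ m)` are boundedly close,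
and radiality puts both at distance about `λ₂ m` from `f(a)`. It remains to see that
`(f(γ m), f(b))_{f(a)} ≳ λ₂ m`. A single Lipschitz estimate of `d(f(γ m), f(b))` is too weak for
this, so we walk along `γ` from time `m` to `b` in steps of length `λ₂ m / λ₁`: each step gives a
Gromov product bound by radiality, and these bounds grow linearly, which pays for the `δ/4` lost
each time hyperbolicity is used to concatenate them.
-/

lemma gp_comm (a x y : X) : gp a x y = gp a y x := by
  simp only [gp, dist_comm x y]; ring

lemma gp_nonneg (a x y : X) : 0 ≤ gp a x y := by
  have := dist_triangle x a y
  rw [dist_comm a y] at this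
  simp only [gp]; linarith

lemma gp_le_dist_left (a x y : X) : gp a x y ≤ dist x a := by
  have := dist_triangle y x a
  rw [dist_comm y x] at this
  simp only [gp]; linarith

lemma gp_le_dist_right (a x y : X) : gp a x y ≤ dist y a :=
  gp_comm a x y ▸ gp_le_dist_left a y x

lemma gp_mem_Icc_dist_left (a x y : X) : gp a x y ∈ Icc 0 (dist a x) :=
  ⟨gp_nonneg a x y, dist_comm a x ▸ gp_le_dist_left a x y⟩

lemma gp_mem_Icc_dist_right (a x y : X) : gp a x y ∈ Icc 0 (dist a y) :=
  ⟨gp_nonneg a x y, dist_comm a y ▸ gp_le_dist_right a x y⟩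

namespace IsDeltaHyperbolic

variable {δ : ℝ}

lemma nonneg (hX : IsDeltaHyperbolic X δ) (x : X) : 0 ≤ δ := by
  have := hX x x x x
  simp only [gp, dist_self, min_self] at this
  linarith

lemma le_gp_trans (hX : IsDeltaHyperbolic X δ) {w x y z : X} {T : ℝ}
    (hxy : T ≤ gp w x y) (hyz : T ≤ gp w y z) : T - δ / 4 ≤ gp w x z := by
  have := hX x z y w
  have := le_min hxy hyz
  linarith

lemma le_gp_of_chain (hX : IsDeltaHyperbolic X δ) (w : X) (k : ℕ) (q : ℕ → X) (c : ℝ)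
    (h : ∀ i ≤ k, c + i * (δ / 4) ≤ gp w (q i) (q (i + 1))) :
    c - δ / 4 ≤ gp w (q 0) (q (k + 1)) := by
  induction k generalizing q c with
  | zero => linarith [h 0 le_rfl, hX.nonneg w]
  | succ k ih =>
    have htail : c ≤ gp w (q 1) (q (k + 2)) := by
      have := ih (fun i => q (i + 1)) (c + δ / 4) fun i hi => by
        have := h (i + 1) (by omega)
        push_cast at this
        linarith
      simpa using this
    have hhead : c ≤ gp w (q 0) (q 1) := by simpa using h 0 (Nat.zero_le _)
    exact hX.le_gp_trans hhead htail

end IsDeltaHyperbolic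

namespace IsGeodesicOn

variable {γ : ℝ → X} {x : X} {M s t : ℝ}

lemma dist_of_le (hγ : IsGeodesicOn γ x M) (hs : s ∈ Icc 0 M) (ht : t ∈ Icc 0 M)
    (hst : s ≤ t) : dist (γ s) (γ t) = t - s := by
  rw [hγ.2 s hs t ht, abs_sub_comm, abs_of_nonneg (sub_nonneg.2 hst)]

lemma dist_base (hγ : IsGeodesicOn γ x M) (ht : t ∈ Icc 0 M) : dist (γ t) x = t := by
  have := hγ.dist_of_le ⟨le_rfl, ht.1.trans ht.2⟩ ht ht.1
  rwa [hγ.1, dist_comm, sub_zero] at this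

lemma gp_base_endpoint {y : X} (hγ : IsGeodesicOn γ x (dist x y)) (hy : γ (dist x y) = y)
    (ht : t ∈ Icc 0 (dist x y)) : gp x (γ t) y = t := by
  have := hγ.dist_of_le ht ⟨ht.1.trans ht.2, le_rfl⟩ ht.2
  rw [hy] at this
  simp only [gp, hγ.dist_base ht, this, dist_comm y x]
  ring

end IsGeodesicOn

/-- With `m = (b,c)_a` one has `(γ m, b)_a = m = (c, σ m)_a`, so two applications of
hyperbolicity give `(γ m, σ m)_a ≥ m - δ/2`. -/
lemma IsDeltaHyperbolic.dist_le_at_gp {δ : ℝ} (hX : IsDeltaHyperbolic X δ) {a b c : X}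
    {γ σ : ℝ → X} (hγ : IsGeodesicOn γ a (dist a b)) (hb : γ (dist a b) = b)
    (hσ : IsGeodesicOn σ a (dist a c)) (hc : σ (dist a c) = c) :
    dist (γ (gp a b c)) (σ (gp a b c)) ≤ δ := by
  set m := gp a b c
  have hδ := hX.nonneg a
  have hmb : m ∈ Icc 0 (dist a b) := gp_mem_Icc_dist_left a b c
  have hmc : m ∈ Icc 0 (dist a c) := gp_mem_Icc_dist_right a b c
  have hγb : m ≤ gp a (γ m) b := (hγ.gp_base_endpoint hb hmb).ge
  have hσc : m ≤ gp a c (σ m) := (gp_comm a c _ ▸ hσ.gp_base_endpoint hc hmc).ge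
  have hbσ := hX.le_gp_trans (le_refl m) hσc
  have hγσ := hX.le_gp_trans (hγb.trans' (by linarith)) hbσ
  simp only [gp, hγ.dist_base hmb, hσ.dist_base hmc] at hγσ
  linarith

section Radial

variable {f : X → Y} {a : X} {l1 μ1 l2 μ2 : ℝ} {γ : ℝ → X} {M : ℝ}

lemma IsRadialWith.le_dist_base (hrad : IsRadialWith f a l2 μ2) (hγ : IsGeodesicOn γ a M)
    {t : ℝ} (ht : t ∈ Icc 0 M) : l2 * t - μ2 ≤ dist (f (γ t)) (f a) := by
  have h0 : (0 : ℝ) ∈ Icc 0 M := ⟨le_rfl, ht.1.trans ht.2⟩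
  have := hrad M h0.2 γ hγ t ht 0 h0
  rwa [hγ.1, hγ.dist_base ht] at this

lemma le_gp_of_radial_step (hf : IsLSL f l1 μ1) (hrad : IsRadialWith f a l2 μ2)
    (hγ : IsGeodesicOn γ a M) {s u : ℝ} (hs : 0 ≤ s) (hsu : s ≤ u) (hu : u ≤ M)
    (hstep : l1 * (u - s) ≤ l2 * s) :
    (l2 * u - (2 * μ2 + μ1)) / 2 ≤ gp (f a) (f (γ s)) (f (γ u)) := by
  have hsM : s ∈ Icc 0 M := ⟨hs, hsu.trans hu⟩
  have huM : u ∈ Icc 0 M := ⟨hs.trans hsu, hu⟩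
  have hs' := hrad.le_dist_base hγ hsM
  have hu' := hrad.le_dist_base hγ huM
  have hsu' := hf (γ s) (γ u)
  rw [hγ.dist_of_le hsM huM hsu] at hsu'
  simp only [gp]; linarith

/-- Chain along `γ` through the times `min (m + i h) M` with step `h = l2 m / l1`: each step is
short enough for `le_gp_of_radial_step`, and the bounds it yields grow by `l2 h / 2 ≥ δ / 4`. -/
lemma le_gp_of_radial {δ : ℝ} (hY : IsDeltaHyperbolic Y δ) (hf : IsLSL f l1 μ1)
    (hrad : IsRadialWith f a l2 μ2) (hγ : IsGeodesicOn γ a M) (hl1 : 0 < l1) (hl2 : 0 < l2)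
    {m : ℝ} (hm : 0 < m) (hmδ : l1 * δ ≤ 2 * l2 ^ 2 * m) (hmM : m ≤ M) :
    (l2 * m - (2 * μ2 + μ1)) / 2 - δ / 4 ≤ gp (f a) (f (γ m)) (f (γ M)) := by
  set h := l2 * m / l1 with hh
  have hpos : 0 < h := by positivity
  have hl1h : l1 * h = l2 * m := by rw [hh]; field_simp
  have hhδ : δ / 4 ≤ l2 * h / 2 := by
    refine le_of_mul_le_mul_left ?_ hl1
    nlinarith [congrArg (l2 * ·) hl1h]
  set k := ⌊(M - m) / h⌋₊
  have hk : k * h ≤ M - m :=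
    (le_div_iff₀ hpos).1 (Nat.floor_le (div_nonneg (by linarith) hpos.le))
  have hk1 : M - m < (k + 1) * h := (div_lt_iff₀ hpos).1 (Nat.lt_floor_add_one _)
  set t : ℕ → ℝ := fun i => min (m + i * h) M with ht
  have ht0 : t 0 = m := by simp [ht, hmM]
  have htk : t (k + 1) = M := min_eq_right (by push_cast; linarith)
  have hchain := hY.le_gp_of_chain (f a) k (fun i => f (γ (t i))) ((l2 * m - (2 * μ2 + μ1)) / 2)
    fun i hi => by
      have hik : (i : ℝ) * h ≤ k * h := by gcongr
      have hti : t i = m + i * h := min_eq_left (by linarith)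
      have hlow : m + i * h ≤ t (i + 1) := le_min (by push_cast; linarith) (by linarith)
      have hup : t (i + 1) ≤ m + (i + 1) * h := by
        have : t (i + 1) ≤ m + ((i + 1 : ℕ) : ℝ) * h := min_le_left _ _
        push_cast at this; exact this
      have hstep : l1 * (t (i + 1) - t i) ≤ l2 * t i :=
        calc l1 * (t (i + 1) - t i) ≤ l1 * h := by gcongr; linarith
          _ = l2 * m := hl1h
          _ ≤ l2 * t i := by
            have : 0 ≤ (i : ℝ) * h := by positivity
            gcongr; rw [hti]; linarith
      have := le_gp_of_radial_step hf hrad hγ (by rw [hti]; positivity) (hti ▸ hlow)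
        (min_le_right _ _) hstep
      have : l2 * (m + i * h) ≤ l2 * t (i + 1) := mul_le_mul_of_nonneg_left hlow hl2.le
      have : (i : ℝ) * (δ / 4) ≤ i * (l2 * h / 2) := by gcongr
      linarith
  simpa only [ht0, htk] using hchain

end Radial

lemma le_gp_map_of_le_gp {δ : ℝ} (hX : IsDeltaHyperbolic X δ) (hY : IsDeltaHyperbolic Y δ)
    (hgX : IsGeodesicSpace X) {f : X → Y} {a : X} {l1 μ1 l2 μ2 : ℝ} (hf : IsLSL f l1 μ1)
    (hrad : IsRadialWith f a l2 μ2) (hl1 : 0 < l1) (hl2 : 0 < l2) {b c : X}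
    (hm : 0 < gp a b c) (hmδ : l1 * δ ≤ 2 * l2 ^ 2 * gp a b c) :
    l2 / 2 * gp a b c - (μ2 + μ1 / 2 + 3 * δ / 4 + l1 * δ / 2) ≤ gp (f a) (f b) (f c) := by
  set m := gp a b c
  have hδ := hX.nonneg a
  obtain ⟨γ, hγ, hb⟩ := hgX a b
  obtain ⟨σ, hσ, hc⟩ := hgX a c
  have hmb : m ∈ Icc 0 (dist a b) := gp_mem_Icc_dist_left a b c
  have hmc : m ∈ Icc 0 (dist a c) := gp_mem_Icc_dist_right a b c
  have hl1δ : 0 ≤ l1 * δ := by positivity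
  set T := l2 / 2 * m - (μ2 + μ1 / 2 + δ / 4 + l1 * δ / 2) with hT
  have hbγ : T - δ / 4 ≤ gp (f a) (f b) (f (γ m)) := by
    have := le_gp_of_radial hY hf hrad hγ hl1 hl2 hm hmδ hmb.2
    rw [hb, gp_comm] at this
    linarith
  have hσc : T ≤ gp (f a) (f (σ m)) (f c) := by
    have := le_gp_of_radial hY hf hrad hσ hl1 hl2 hm hmδ hmc.2
    rw [hc] at this
    linarith
  have hγσ : T ≤ gp (f a) (f (γ m)) (f (σ m)) := by
    have hclose : l1 * dist (γ m) (σ m) ≤ l1 * δ :=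
      mul_le_mul_of_nonneg_left (hX.dist_le_at_gp hγ hb hσ hc) hl1.le
    have := hf (γ m) (σ m)
    have := hrad.le_dist_base hγ hmb
    have := hrad.le_dist_base hσ hmc
    have : 0 ≤ l2 * m := by positivity
    simp only [T, gp]; linarith
  have := hY.le_gp_trans hbγ (hY.le_gp_trans hγσ hσc)
  linarith

lemma le_gp_map {δ : ℝ} (hX : IsDeltaHyperbolic X δ) (hY : IsDeltaHyperbolic Y δ)
    (hgX : IsGeodesicSpace X) {f : X → Y} {a : X} {l1 μ1 l2 μ2 : ℝ} (hf : IsLSL f l1 μ1)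
    (hrad : IsRadialWith f a l2 μ2) (hl1 : 0 < l1) (hμ1 : 0 ≤ μ1) (hl2 : 0 < l2) (hμ2 : 0 ≤ μ2)
    (b c : X) :
    l2 / 2 * gp a b c - (μ2 + μ1 / 2 + 3 * δ / 4 + l1 * δ / 2 + l1 * δ / (4 * l2)) ≤
      gp (f a) (f b) (f c) := by
  have hδ := hX.nonneg a
  have hm₀ : l2 / 2 * (l1 * δ / (2 * l2 ^ 2)) = l1 * δ / (4 * l2) := by field_simp; ring
  have : 0 ≤ l1 * δ / (4 * l2) := by positivity
  by_cases hlarge : 0 < gp a b c ∧ l1 * δ / (2 * l2 ^ 2) ≤ gp a b c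
  · have hmδ : l1 * δ ≤ 2 * l2 ^ 2 * gp a b c := by
      rw [← div_le_iff₀' (by positivity)]; exact hlarge.2
    have := le_gp_map_of_le_gp hX hY hgX hf hrad hl1 hl2 hlarge.1 hmδ
    linarith
  · have hsmall : gp a b c ≤ l1 * δ / (2 * l2 ^ 2) := by
      by_contra! h
      exact hlarge ⟨(by positivity : 0 ≤ l1 * δ / (2 * l2 ^ 2)).trans_lt h, h.le⟩
    have := mul_le_mul_of_nonneg_left hsmall (by positivity : 0 ≤ l2 / 2)
    have := gp_nonneg (f a) (f b) (f c)
    have : 0 ≤ l1 * δ := by positivity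
    linarith

lemma visualFn_of_le_gp {f : X → Y} {a : X} {A B : ℝ} (hA : 0 < A)
    (hfab : ∀ b c : X, gp (f a) (f b) (f c) ≥ A * gp a b c - B) : VisualFn f :=
  ⟨a, fun x y hxy => tendsto_atTop_mono (fun n => hfab (x n) (y n))
    (tendsto_atTop_add_const_right _ (-B) (hxy.const_mul_atTop hA))⟩

theorem stmt9_general {X : Type*} [MetricSpace X] {Y : Type*} [MetricSpace Y]
    (δ : ℝ) (hX : IsDeltaHyperbolic X δ) (hY : IsDeltaHyperbolic Y δ)
    (hgX : IsGeodesicSpace X)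
    (f : X → Y) (l1 μ1 l2 μ2 : ℝ) (hl1 : 0 < l1) (hμ1 : 0 < μ1)
    (hl2 : 0 < l2) (hμ2 : 0 < μ2)
    (hf : IsLSL f l1 μ1) (a : X) (hrad : IsRadialWith f a l2 μ2) :
    (∃ A B : ℝ, 0 < A ∧ 0 < B ∧
      ∀ b c : X, gp (f a) (f b) (f c) ≥ A * gp a b c - B) ∧ VisualFn f := by
  have hδ := hX.nonneg a
  have hbound b c := le_gp_map hX hY hgX hf hrad hl1 hμ1.le hl2 hμ2.le b c
  have hB : 0 < μ2 + μ1 / 2 + 3 * δ / 4 + l1 * δ / 2 + l1 * δ / (4 * l2) := by positivity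
  exact ⟨⟨l2 / 2, _, by positivity, hB, hbound⟩, visualFn_of_le_gp (by positivity) hbound⟩

/-- a `(λ₁,μ₁)`-LSL `(λ₂,μ₂)`-radial function between δ-hyperbolic
geodesic spaces satisfies `(f(b),f(c))_{f(a)} ≥ A·(b,c)_a − B` for constants
`A, B > 0`; in particular `f` is visual. -/
theorem stmt9 {X : Type*} [MetricSpace X] {Y : Type*} [MetricSpace Y]
    (δ : ℝ) (hX : IsDeltaHyperbolic X δ) (hY : IsDeltaHyperbolic Y δ)
    (hgX : IsGeodesicSpace X) (hgY : IsGeodesicSpace Y)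
    (f : X → Y) (l1 μ1 l2 μ2 : ℝ) (hl1 : 0 < l1) (hμ1 : 0 < μ1)
    (hl2 : 0 < l2) (hμ2 : 0 < μ2)
    (hf : IsLSL f l1 μ1) (a : X) (hrad : IsRadialWith f a l2 μ2) :
    (∃ A B : ℝ, 0 < A ∧ 0 < B ∧
      ∀ b c : X, gp (f a) (f b) (f c) ≥ A * gp a b c - B) ∧ VisualFn f :=
  stmt9_general δ hX hY hgX f l1 μ1 l2 μ2 hl1 hμ1 hl2 hμ2 hf a hrad

end Gromov
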